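/- arXiv:nlin/0406038 — 5 statements merged into one kernel-verified Lean document; each statement's English description precedes it below -/
import Mathlib

section
/- The functions ω₁(x) = √(−b)(1−x)/(b−x), ω₂(x) = −√(−b(b−1))/(b−x), ω₃(x) = √(b−1)·x/(b−x) satisfy the time-dependent Euler top equations dω₁/dx = ω₂ω₃/x, dω₂/dx = ω₁ω₃/(x(x−1)), dω₃/dx = ω₁ω₂/(1−x) on any domain where x ≠ 0, 1, b. -/
/-!
Each ωᵢ has the form f(t)/(b − t) with f affine, so its derivative is an explicit rational
function with denominator (b − x)². Clearing denominators, the first Euler top equation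
reduces to s3² = b − 1, the third to s1² = −b, and the second holds identically.
-/

theorem HasDerivAt.div_const_sub {𝕜 : Type*} [NontriviallyNormedField 𝕜] {f : 𝕜 → 𝕜}
    {f' b x : 𝕜} (hf : HasDerivAt f f' x) (hxb : x ≠ b) :
    HasDerivAt (fun t => f t / (b - t)) ((f' * (b - x) + f x) / (b - x) ^ 2) x :=
  (hf.div ((hasDerivAt_id' x).const_sub b) (sub_ne_zero.mpr hxb.symm)).congr_deriv (by ring)

theorem stmt_0_general (b s1 s2 s3 : ℂ)
    (hs1 : s1 ^ 2 = -b) (hs3 : s3 ^ 2 = b - 1) (hs2 : s2 = s1 * s3)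
    (x : ℂ) (hx0 : x ≠ 0) (hx1 : x ≠ 1) (hxb : x ≠ b) :
    HasDerivAt (fun t => s1 * (1 - t) / (b - t))
      ((-s2 / (b - x)) * (s3 * x / (b - x)) / x) x ∧
    HasDerivAt (fun t => -s2 / (b - t))
      ((s1 * (1 - x) / (b - x)) * (s3 * x / (b - x)) / (x * (x - 1))) x ∧
    HasDerivAt (fun t => s3 * t / (b - t))
      ((s1 * (1 - x) / (b - x)) * (-s2 / (b - x)) / (1 - x)) x := by
  subst hs2
  refine ⟨?_, ?_, ?_⟩
  · refine ((((hasDerivAt_id' x).const_sub 1).const_mul s1).div_const_sub hxb).congr_deriv ?_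
    field_simp
    linear_combination s1 * hs3
  · refine ((hasDerivAt_const x (-(s1 * s3))).div_const_sub hxb).congr_deriv ?_
    field_simp
    ring
  · refine (((hasDerivAt_id' x).const_mul s3).div_const_sub hxb).congr_deriv ?_
    field_simp
    linear_combination s3 * hs1

/-- The functions ω₁(x) = √(−b)(1−x)/(b−x), ω₂(x) = −√(−b(b−1))/(b−x),
ω₃(x) = √(b−1)·x/(b−x) satisfy the time-dependent Euler top equations
ω₁' = ω₂ω₃/x, ω₂' = ω₁ω₃/(x(x−1)), ω₃' = ω₁ω₂/(1−x) wherever x ≠ 0, 1, b.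
The square roots s1, s2, s3 of −b, −b(b−1), b−1 are fixed with consistent signs. -/
theorem stmt_0 (b s1 s2 s3 : ℂ) (hb0 : b ≠ 0) (hb1 : b ≠ 1)
    (hs1 : s1 ^ 2 = -b) (hs3 : s3 ^ 2 = b - 1) (hs2 : s2 = s1 * s3)
    (x : ℂ) (hx0 : x ≠ 0) (hx1 : x ≠ 1) (hxb : x ≠ b) :
    HasDerivAt (fun t => s1 * (1 - t) / (b - t))
      ((-s2 / (b - x)) * (s3 * x / (b - x)) / x) x ∧
    HasDerivAt (fun t => -s2 / (b - t))
      ((s1 * (1 - x) / (b - x)) * (s3 * x / (b - x)) / (x * (x - 1))) x ∧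
    HasDerivAt (fun t => s3 * t / (b - t))
      ((s1 * (1 - x) / (b - x)) * (-s2 / (b - x)) / (1 - x)) x :=
  stmt_0_general b s1 s2 s3 hs1 hs3 hs2 x hx0 hx1 hxb
end

section
/- The function y(x) = −(b−1)x/(x−b) satisfies the Painlevé VI equation y'' = (1/2)(1/y + 1/(y−1) + 1/(y−x))(y')² − (1/x + 1/(x−1) + 1/(y−x))y' + [y(y−1)(y−x)/(x²(x−1)²)][α + βx/y² + γ(x−1)/(y−1)² + δx(x−1)/(y−x)²] with parameters (α, β, γ, δ) = (1/2, 0, 0, 1/2). -/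
/-!
The solution is a Möbius function of `x`: `y' = b(b-1)/(x-b)^2` and `y'' = -2b(b-1)/(x-b)^3`, while
`y - 1 = -b(x-1)/(x-b)` and `y - x = -x(x-1)/(x-b)` factor over the same pole. Substituting these,
the equation becomes an identity between rational functions of `x` and `b`.
-/

/-- The Painlevé VI equation with parameters (α,β,γ,δ), as a pointwise condition
on a function y at the point x. -/
def PainleveVI (α β γ δ : ℂ) (y : ℂ → ℂ) (x : ℂ) : Prop :=
  deriv (deriv y) x =
    (1 / 2) * (1 / y x + 1 / (y x - 1) + 1 / (y x - x)) * (deriv y x) ^ 2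
      - (1 / x + 1 / (x - 1) + 1 / (y x - x)) * deriv y x
      + (y x * (y x - 1) * (y x - x) / (x ^ 2 * (x - 1) ^ 2)) *
        (α + β * x / (y x) ^ 2 + γ * (x - 1) / (y x - 1) ^ 2
          + δ * x * (x - 1) / (y x - x) ^ 2)

section
variable {𝕜 : Type*} [NontriviallyNormedField 𝕜]

theorem hasDerivAt_neg_mul_div_sub (a b x : 𝕜) (hx : x ≠ b) :
    HasDerivAt (fun z => -(a * z) / (z - b)) (a * b / (x - b) ^ 2) x := by
  have hxb : x - b ≠ 0 := sub_ne_zero.mpr hx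
  refine ((((hasDerivAt_id' x).const_mul a).fun_neg).fun_div
    ((hasDerivAt_id' x).sub_const b) hxb).congr_deriv ?_
  field_simp
  ring

theorem hasDerivAt_const_div_sub_sq (c b x : 𝕜) (hx : x ≠ b) :
    HasDerivAt (fun z => c / (z - b) ^ 2) (-(2 * c) / (x - b) ^ 3) x := by
  have hxb : x - b ≠ 0 := sub_ne_zero.mpr hx
  refine ((hasDerivAt_const x c).fun_div (((hasDerivAt_id' x).sub_const b).fun_pow 2)
    (pow_ne_zero 2 hxb)).congr_deriv ?_
  field_simp
  ring

theorem deriv_deriv_neg_mul_div_sub (a b x : 𝕜) (hx : x ≠ b) :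
    deriv (deriv fun z => -(a * z) / (z - b)) x = -(2 * (a * b)) / (x - b) ^ 3 := by
  have hderiv : deriv (fun z => -(a * z) / (z - b)) =ᶠ[nhds x] fun z => a * b / (z - b) ^ 2 := by
    filter_upwards [isOpen_ne.mem_nhds hx] with z hz
    exact (hasDerivAt_neg_mul_div_sub a b z hz).deriv
  rw [hderiv.deriv_eq]
  exact (hasDerivAt_const_div_sub_sq _ b x hx).deriv

end

theorem stmt_3_general (b : ℂ) (hb0 : b ≠ 0) (hb1 : b ≠ 1)
    (y : ℂ → ℂ) (hy : y = fun x => -((b - 1) * x) / (x - b))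
    (x : ℂ) (hx0 : x ≠ 0) (hx1 : x ≠ 1) (hxb : x ≠ b) :
    PainleveVI (1 / 2) 0 0 (1 / 2) y x := by
  subst hy
  have hy_sub_one : -((b - 1) * x) / (x - b) - 1 = -(b * (x - 1)) / (x - b) := by
    field_simp; ring
  have hy_sub_x : -((b - 1) * x) / (x - b) - x = -(x * (x - 1)) / (x - b) := by
    field_simp; ring
  unfold PainleveVI
  rw [deriv_deriv_neg_mul_div_sub _ _ _ hxb,
    (hasDerivAt_neg_mul_div_sub _ _ _ hxb).deriv, hy_sub_one, hy_sub_x]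
  field_simp
  ring

/-- y(x) = −(b−1)x/(x−b) satisfies Painlevé VI with (α,β,γ,δ) = (1/2,0,0,1/2). -/
theorem stmt_3 (b : ℂ) (hb0 : b ≠ 0) (hb1 : b ≠ 1)
    (y : ℂ → ℂ) (hy : y = fun x => -((b - 1) * x) / (x - b))
    (x : ℂ) (hx0 : x ≠ 0) (hx1 : x ≠ 1) (hxb : x ≠ b)
    (hy0 : y x ≠ 0) (hy1 : y x - 1 ≠ 0) (hyx : y x - x ≠ 0) :
    PainleveVI (1 / 2) 0 0 (1 / 2) y x :=
  stmt_3_general b hb0 hb1 y hy x hx0 hx1 hxb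
end

section
/- The function y(x) = (x² − b)/(2(x − b)) satisfies the Painlevé VI equation with parameters (α, β, γ, δ) = (2, −1/2, 1/2, 0). -/
def painleveVIRhs {K : Type*} [Field K] (α β γ δ x y y' : K) : K :=
  (1 / 2) * (1 / y + 1 / (y - 1) + 1 / (y - x)) * y' ^ 2
    - (1 / x + 1 / (x - 1) + 1 / (y - x)) * y'
    + (y * (y - 1) * (y - x) / (x ^ 2 * (x - 1) ^ 2)) *
      (α + β * x / y ^ 2 + γ * (x - 1) / (y - 1) ^ 2 + δ * x * (x - 1) / (y - x) ^ 2)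

theorem painleveVI_iff {α β γ δ : ℂ} {y : ℂ → ℂ} {x : ℂ} :
    PainleveVI α β γ δ y x ↔
      deriv (deriv y) x = painleveVIRhs α β γ δ x (y x) (deriv y x) :=
  Iff.rfl

theorem painleveVIRhs_eq_of_two_mul_sub_mul_eq {K : Type*} [Field K] [CharZero K] {b x y : K}
    (hx0 : x ≠ 0) (hx1 : x - 1 ≠ 0) (hy0 : y ≠ 0) (hy1 : y - 1 ≠ 0) (hyx : y - x ≠ 0)
    (hy : 2 * (x - b) * y = x ^ 2 - b) :
    painleveVIRhs 2 (-(1 / 2)) (1 / 2) 0 x y ((x - y) / (x - b)) = b * (b - 1) / (x - b) ^ 3 := by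
  have h2y : 2 * y - 1 ≠ 0 := by
    intro h
    exact mul_ne_zero hx0 hx1 (by linear_combination (x - b) * h - hy)
  -- after this substitution the only denominators are `x`, `x - 1`, `y`, `y - 1`, `y - x`, `2y - 1`
  obtain rfl : b = x - x * (x - 1) / (2 * y - 1) := by
    field_simp
    linear_combination -hy
  simp only [painleveVIRhs, sub_sub_cancel]
  field_simp
  ring

section Calculus

variable {𝕜 : Type*} [NontriviallyNormedField 𝕜] [CharZero 𝕜] {b z : 𝕜}

def rationalSolution (b x : 𝕜) : 𝕜 := (x ^ 2 - b) / (2 * (x - b))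

theorem hasDerivAt_rationalSolution (hz : z ≠ b) :
    HasDerivAt (rationalSolution b) ((z ^ 2 - 2 * b * z + b) / (2 * (z - b) ^ 2)) z := by
  have hz' : z - b ≠ 0 := sub_ne_zero.mpr hz
  refine (((hasDerivAt_pow 2 z).sub_const b).div (((hasDerivAt_id' z).sub_const b).const_mul 2)
    (mul_ne_zero two_ne_zero hz')).congr_deriv ?_
  field_simp
  ring

theorem deriv_rationalSolution (hz : z ≠ b) :
    deriv (rationalSolution b) z = (z - rationalSolution b z) / (z - b) := by
  have hz' : z - b ≠ 0 := sub_ne_zero.mpr hz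
  rw [(hasDerivAt_rationalSolution hz).deriv, rationalSolution]
  field_simp
  ring

theorem deriv_deriv_rationalSolution (hz : z ≠ b) :
    deriv (deriv (rationalSolution b)) z = b * (b - 1) / (z - b) ^ 3 := by
  have hz' : z - b ≠ 0 := sub_ne_zero.mpr hz
  have hderiv : deriv (rationalSolution b) =ᶠ[nhds z]
      fun x => (x ^ 2 - 2 * b * x + b) / (2 * (x - b) ^ 2) :=
    Filter.eventually_of_mem (isOpen_ne.mem_nhds hz) fun x hx =>
      (hasDerivAt_rationalSolution hx).deriv
  have hderiv2 : HasDerivAt (fun x => (x ^ 2 - 2 * b * x + b) / (2 * (x - b) ^ 2))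
      (b * (b - 1) / (z - b) ^ 3) z := by
    refine ((((hasDerivAt_pow 2 z).fun_sub ((hasDerivAt_id' z).const_mul (2 * b))).add_const b).div
      ((((hasDerivAt_id' z).sub_const b).fun_pow 2).const_mul 2)
      (mul_ne_zero two_ne_zero (pow_ne_zero _ hz'))).congr_deriv ?_
    field_simp
    ring
  rw [hderiv.deriv_eq, hderiv2.deriv]

end Calculus

theorem stmt_5_general (b : ℂ)
    (y : ℂ → ℂ) (hy : y = fun x => (x ^ 2 - b) / (2 * (x - b)))
    (x : ℂ) (hx0 : x ≠ 0) (hx1 : x ≠ 1) (hxb : x ≠ b)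
    (hy0 : y x ≠ 0) (hy1 : y x - 1 ≠ 0) (hyx : y x - x ≠ 0) :
    PainleveVI 2 (-(1 / 2)) (1 / 2) 0 y x := by
  change y = rationalSolution b at hy
  subst hy
  have hrel : 2 * (x - b) * rationalSolution b x = x ^ 2 - b := by
    rw [rationalSolution]
    field_simp [sub_ne_zero.mpr hxb]
  rw [painleveVI_iff, deriv_rationalSolution hxb, deriv_deriv_rationalSolution hxb,
    painleveVIRhs_eq_of_two_mul_sub_mul_eq hx0 (sub_ne_zero.mpr hx1) hy0 hy1 hyx hrel]

/-- y(x) = (x²−b)/(2(x−b)) satisfies Painlevé VI with (α,β,γ,δ) = (2,−1/2,1/2,0). -/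
theorem stmt_5 (b : ℂ) (hb0 : b ≠ 0) (hb1 : b ≠ 1)
    (y : ℂ → ℂ) (hy : y = fun x => (x ^ 2 - b) / (2 * (x - b)))
    (x : ℂ) (hx0 : x ≠ 0) (hx1 : x ≠ 1) (hxb : x ≠ b)
    (hy0 : y x ≠ 0) (hy1 : y x - 1 ≠ 0) (hyx : y x - x ≠ 0) :
    PainleveVI 2 (-(1 / 2)) (1 / 2) 0 y x :=
  stmt_5_general b y hy x hx0 hx1 hxb hy0 hy1 hyx
end

section
/- Define r_i(z) = z^{−i}(b e^z + (1−b)Σ_{j=0}^{i−1} z^j/j!) for i ≥ 1 (as formal Laurent series, or with e^z truncated to a sufficiently high polynomial). Then for all i, j ≥ 1, Res_z r_i(z) r_j(−z) = 0, where Res_z extracts the coefficient of z^{−1}. -/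
/-- Coefficient of `z^n` in the Laurent series
`r_i(z) = z^{-i} (b e^z + (1-b) ∑_{j=0}^{i-1} z^j / j!)`, namely
`(if n < 0 then 1 else b) / (n+i)!` for `n ≥ -i` and `0` otherwise. -/
noncomputable def rCoeff (b : ℂ) (i : ℕ) (n : ℤ) : ℂ :=
  if -(i : ℤ) ≤ n then (if n < 0 then 1 else b) / (n + i).toNat.factorial else 0

/-- `Res_z f(z) g(-z)`: the coefficient of `z^{-1}` in `f(z)g(-z)`, where `f, g`
are given by their coefficient functions. -/
noncomputable def resPair (f g : ℤ → ℂ) : ℂ :=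
  ∑' m : ℤ, f m * ((-1 : ℂ) ^ (-1 - m) * g (-1 - m))

/-!
Put `N = i + j - 1` and write the coefficient of `z^{k-i}` in `r_i` as `c_k / k!`, where
`c_k = 1` for `k < i` and `c_k = b` otherwise. The residue is then a finite sum over
`0 ≤ k ≤ N`, and in its `k`-th term exactly one of the two factors takes the value `b`
(the other index `N - k` is `< j` precisely when `k ≥ i`). Hence the term is
`± b (-1)^k / (k! (N - k)!) = ± (b / N!) (-1)^k (N choose k)`, and the sum vanishes because
the alternating sum of a row of binomial coefficients is `0` for `N ≥ 1`.
-/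

open Finset

lemma neg_one_zpow_natCast_sub_natCast {R : Type*} [DivisionRing R] (a c : ℕ) :
    (-1 : R) ^ ((a : ℤ) - c) = (-1) ^ a * (-1) ^ c := by
  rw [zpow_natCast_sub_natCast₀ (by norm_num), div_eq_mul_inv, ← inv_pow, inv_neg, inv_one]

lemma alternating_sum_range_choose_of_ne_zero {R : Type*} [Ring R] {N : ℕ} (hN : N ≠ 0) :
    ∑ k ∈ range (N + 1), ((-1 : R) ^ k * N.choose k) = 0 := by
  simpa using congrArg (Int.cast : ℤ → R) (Int.alternating_sum_range_choose_of_ne hN)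

lemma resPair_eq_sum_range {f g : ℤ → ℂ} {i j : ℕ}
    (hf : ∀ n < -(i : ℤ), f n = 0) (hg : ∀ n < -(j : ℤ), g n = 0) :
    resPair f g = ∑ k ∈ range (i + j),
      f (k - i) * ((-1 : ℂ) ^ (-1 - ((k : ℤ) - i)) * g (-1 - ((k : ℤ) - i))) := by
  let shift : ℕ ↪ ℤ := ⟨fun k ↦ (k : ℤ) - i, sub_left_injective.comp Nat.cast_injective⟩
  rw [resPair, tsum_eq_sum (s := (range (i + j)).map shift), sum_map]
  · rfl
  intro m hm
  simp only [mem_map, mem_range, shift, Function.Embedding.coeFn_mk, not_exists, not_and] at hm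
  by_cases hlow : m < -(i : ℤ)
  · simp [hf m hlow]
  · have hhigh : -1 - m < -(j : ℤ) := by
      by_contra! h
      exact hm (m + i).toNat (by omega) (by omega)
    simp [hg _ hhigh]

lemma rCoeff_eq_zero_of_lt (b : ℂ) {i : ℕ} {n : ℤ} (hn : n < -(i : ℤ)) : rCoeff b i n = 0 :=
  if_neg (not_le.mpr hn)

lemma rCoeff_natCast_sub (b : ℂ) (i k : ℕ) :
    rCoeff b i ((k : ℤ) - i) = (if k < i then 1 else b) / k.factorial := by
  rw [rCoeff, if_pos (by omega), sub_add_cancel, Int.toNat_natCast]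
  congr 2
  simp only [sub_neg, Nat.cast_lt]

lemma rCoeff_mul_rCoeff_reflect (b : ℂ) {i j N k : ℕ} (hN : i + j = N + 1) (hk : k ≤ N) :
    rCoeff b i ((k : ℤ) - i) *
        ((-1 : ℂ) ^ (-1 - ((k : ℤ) - i)) * rCoeff b j (-1 - ((k : ℤ) - i))) =
      b * (-1) ^ (i + 1) / N.factorial * ((-1) ^ k * N.choose k) := by
  have hsign : (-1 : ℂ) ^ (-1 - ((k : ℤ) - i)) = (-1) ^ i * (-1) ^ (k + 1) := by
    rw [show -1 - ((k : ℤ) - i) = (i : ℤ) - (k + 1 : ℕ) by push_cast; ring]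
    exact neg_one_zpow_natCast_sub_natCast i (k + 1)
  have hreflect : -1 - ((k : ℤ) - i) = ((N - k : ℕ) : ℤ) - j := by omega
  have hchoose : ((k.factorial : ℂ) * (N - k).factorial)⁻¹ = N.choose k / N.factorial := by
    rw [Nat.cast_choose ℂ hk, div_div_cancel_left' (Nat.cast_ne_zero.mpr N.factorial_ne_zero)]
  have hcoeff : (if k < i then (1 : ℂ) else b) * (if N - k < j then 1 else b) = b := by
    split_ifs <;> first | omega | simp
  rw [hsign, hreflect, rCoeff_natCast_sub, rCoeff_natCast_sub]
  linear_combination ((-1) ^ i * (-1) ^ (k + 1) / (k.factorial * (N - k).factorial) : ℂ) * hcoeff +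
    b * (-1) ^ i * (-1) ^ (k + 1) * hchoose

/-- For all i, j ≥ 1, `Res_z r_i(z) r_j(-z) = 0`. -/
theorem stmt_14 (b : ℂ) (i j : ℕ) (hi : 1 ≤ i) (hj : 1 ≤ j) :
    resPair (rCoeff b i) (rCoeff b j) = 0 := by
  obtain ⟨N, hN⟩ : ∃ N, i + j = N + 1 := ⟨i + j - 1, by omega⟩
  rw [resPair_eq_sum_range (fun _ ↦ rCoeff_eq_zero_of_lt b) (fun _ ↦ rCoeff_eq_zero_of_lt b),
    sum_congr rfl fun k hk ↦ rCoeff_mul_rCoeff_reflect b hN (by rw [mem_range] at hk; omega), ← mul_sum,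
    hN, alternating_sum_range_choose_of_ne_zero (by omega), mul_zero]
end

section
/- For the partition with μ−1 parts all equal to μ+1, the Schur polynomial evaluated at t = (1,0,0,…) equals S^{(μ−1)}_{μ+1,…,μ+1}(1,0,0,…) = det(1/(μ+j−i+1)!)_{1≤i,j≤μ−1} = μ · (∏_{i=1}^{μ−1} (i!)²) / (∏_{i=1}^{2μ−1} i!). -/
/-- The elementary Schur polynomial `S_ℓ` evaluated at `t = (1,0,0,…)`:
`S_ℓ(1,0,0,…) = 1/ℓ!` for `ℓ ≥ 0` and `0` for `ℓ < 0`. -/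
noncomputable def eS (ℓ : ℤ) : ℚ :=
  if 0 ≤ ℓ then (ℓ.toNat.factorial : ℚ)⁻¹ else 0

/-!
After transposing, write `1/(N - j)! = N.descFactorial j / N!` with `N = μ + 1 + i` (both sides
vanish when `j > N`), and pull `1/N!` out of row `i`. The falling factorial `x.descFactorial j` is
a monic polynomial of degree `j` in `x`, so the remaining determinant is the Vandermonde
determinant of the consecutive points `μ + 1 + i`, which is the superfactorial `sf (μ - 2)`.
The closed form then follows from `sf (2μ - 1) = sf μ · ∏ᵢ (μ + 1 + i)!` and
`sf (μ - 2) · sf μ = μ · sf (μ - 1)²`.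
-/

open Finset Matrix Polynomial

namespace Nat

theorem superFactorial_add (a b : ℕ) :
    (a + b).superFactorial = a.superFactorial * ∏ i ∈ range b, (a + 1 + i).factorial := by
  induction b with
  | zero => simp
  | succ b ih =>
    rw [← add_assoc, superFactorial_succ, ih, prod_range_succ, add_right_comm a 1 b]
    ring

theorem superFactorial_mul_superFactorial_add_two (m : ℕ) :
    m.superFactorial * (m + 2).superFactorial = (m + 2) * (m + 1).superFactorial ^ 2 := by
  rw [superFactorial_succ (m + 1), superFactorial_succ m, factorial_succ (m + 1)]
  ring

end Nat

theorem eS_natCast_sub_natCast (N j : ℕ) :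
    eS ((N : ℤ) - j) = (N.factorial : ℚ)⁻¹ * N.descFactorial j := by
  by_cases hj : j ≤ N
  · have hfac : ((N - j).factorial : ℚ) * N.descFactorial j = N.factorial := by
      exact_mod_cast Nat.factorial_mul_descFactorial hj
    have hdesc : (N.descFactorial j : ℚ) ≠ 0 := by
      exact_mod_cast (Nat.descFactorial_pos.mpr hj).ne'
    rw [eS, if_pos (by omega), show ((N : ℤ) - j).toNat = N - j by omega, ← hfac]
    field_simp
  · rw [eS, if_neg (by omega), Nat.descFactorial_eq_zero_iff_lt.mpr (by omega)]
    simp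

theorem det_descFactorial_natCast_add {R : Type*} [CommRing R] [IsDomain R] (c n : ℕ) :
    (of fun i j : Fin (n + 1) => ((c + i : ℕ).descFactorial j : R)).det = n.superFactorial := by
  have hvdm := det_eval_matrixOfPolynomials_eq_det_vandermonde
    (fun i : Fin (n + 1) => ((c + i : ℕ) : R)) (fun j => descPochhammer R j)
    (fun j => descPochhammer_natDegree R j) (fun j => monic_descPochhammer R j)
  simp only [descPochhammer_eval_eq_descFactorial] at hvdm
  rw [← hvdm, ← det_vandermonde_id_eq_superFactorial]
  push_cast
  simp_rw [add_comm (c : R)]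
  exact det_vandermonde_add _ _

theorem det_eS_natCast_add_sub (c n : ℕ) :
    (of fun i j : Fin (n + 1) => eS ((c + i : ℕ) - (j : ℕ))).det =
      n.superFactorial / ∏ i ∈ range (n + 1), ((c + i).factorial : ℚ) := by
  simp_rw [eS_natCast_sub_natCast]
  refine (det_mul_column _
    (of fun i j : Fin (n + 1) => ((c + i : ℕ).descFactorial j : ℚ))).trans ?_
  rw [det_descFactorial_natCast_add, ← Fin.prod_univ_eq_prod_range
    (fun i => ((c + i).factorial : ℚ)), prod_inv_distrib, div_eq_inv_mul]

/-- For the partition with μ−1 parts all equal to μ+1,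
`S^{(μ-1)}_{μ+1,…,μ+1}(1,0,0,…) = det(1/(μ+j-i+1)!)_{1≤i,j≤μ-1}
= μ ∏_{i=1}^{μ-1} (i!)² / ∏_{i=1}^{2μ-1} i!`. -/
theorem stmt_17 (μ : ℕ) (hμ : 2 ≤ μ) :
    Matrix.det (Matrix.of fun i j : Fin (μ - 1) =>
        eS ((μ : ℤ) + 1 + (j : ℤ) - (i : ℤ))) =
      (μ : ℚ) * (∏ i ∈ Finset.range (μ - 1), ((i + 1).factorial : ℚ) ^ 2)
        / ∏ i ∈ Finset.range (2 * μ - 1), ((i + 1).factorial : ℚ) := by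
  obtain ⟨m, rfl⟩ : ∃ m, μ = m + 2 := ⟨μ - 2, by omega⟩
  rw [show m + 2 - 1 = m + 1 by omega, show 2 * (m + 2) - 1 = (m + 2) + (m + 1) by omega,
    ← det_transpose]
  have htoeplitz : (of fun i j : Fin (m + 1) => eS ((m + 2 : ℕ) + 1 + (j : ℤ) - (i : ℤ)))ᵀ =
      of fun i j : Fin (m + 1) => eS ((m + 3 + i : ℕ) - (j : ℕ)) := by
    ext i j
    simp only [transpose_apply, of_apply]
    congr 1
  have hsf : (m.superFactorial : ℚ) * (m + 2).superFactorial =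
      (m + 2) * (m + 1).superFactorial ^ 2 := by
    exact_mod_cast Nat.superFactorial_mul_superFactorial_add_two m
  have hsplit : ∏ i ∈ range (m + 2 + (m + 1)), ((i + 1).factorial : ℚ) =
      (m + 2).superFactorial * ∏ i ∈ range (m + 1), ((m + 3 + i).factorial : ℚ) := by
    exact_mod_cast (Nat.prod_range_factorial_succ _).trans (Nat.superFactorial_add (m + 2) (m + 1))
  rw [htoeplitz, det_eS_natCast_add_sub, hsplit, prod_pow]
  norm_cast
  rw [Nat.prod_range_factorial_succ]
  push_cast
  have hsf_ne : ((m + 2).superFactorial : ℚ) ≠ 0 := by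
    rw [← Nat.prod_range_factorial_succ]
    positivity
  field_simp
  linear_combination hsf
end
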